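/- arXiv:2206.08111 — 3 statements merged into one kernel-verified Lean document; each statement's English description precedes it below -/
import Mathlib

section
/- If Z follows the generalized Gaussian distribution on ℝ^d with density proportional to exp(−‖z‖_+²/(2σ_+²)) for a norm ‖·‖_+, then ‖Z‖_+² follows a Gamma distribution with shape d/2 and scale 2σ_+²; in particular E[‖Z‖_+²] = σ_+² d. -/
open MeasureTheory ProbabilityTheory Set Module
open scoped ENNReal

/-! By homogeneity `{p ^ 2 ≤ x} = √x • {p ≤ 1}` for the seminorm `p = N`, so under a Haar
measure on a space of dimension `d` the law of `p ^ 2` has distribution function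
`x ↦ V · x ^ (d / 2)` on `[0, ∞)`, with `V = vol {p ≤ 1}`; that is, density
`V · (d / 2) · t ^ (d / 2 - 1)` on `(0, ∞)`. The Gaussian weight is a function `c e ^ (-r t)` of
`t = p ^ 2`, so the law of `p ^ 2` under `μ` has density proportional to
`t ^ (d / 2 - 1) e ^ (-r t)`, a multiple of the Gamma density, and the multiple is `1` because
both laws are probability measures. That `V < ∞` follows from the weight being bounded below on
`{p ≤ 1}`. -/

section WithDensity

variable {α β : Type*} [MeasurableSpace α] [MeasurableSpace β]

theorem MeasureTheory.Measure.map_withDensity_comp (ν : Measure α) {T : α → β}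
    (hT : Measurable T) {g : β → ℝ≥0∞} (hg : Measurable g) :
    (ν.withDensity (g ∘ T)).map T = (ν.map T).withDensity g := by
  ext s hs
  rw [map_apply hT hs, withDensity_apply _ (hT hs), withDensity_apply _ hs,
    setLIntegral_map hs hg hT]
  rfl

theorem MeasureTheory.measure_ne_top_of_withDensity_ne_top {ν : Measure α} {g : α → ℝ≥0∞}
    {s : Set α} {m : ℝ≥0∞} (hs : MeasurableSet s) (hm : m ≠ 0) (hmg : ∀ x ∈ s, m ≤ g x)
    (hfin : ν.withDensity g s ≠ ∞) : ν s ≠ ∞ := by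
  refine (ENNReal.lt_top_of_mul_ne_top_right (ne_top_of_le_ne_top hfin ?_) hm).ne
  rw [← setLIntegral_const, withDensity_apply _ hs]
  exact setLIntegral_mono' hs hmg

theorem MeasureTheory.Measure.eq_of_eq_smul_of_isProbabilityMeasure {ν π : Measure α}
    [IsProbabilityMeasure ν] [IsProbabilityMeasure π] {K : ℝ≥0∞} (h : ν = K • π) : ν = π := by
  have hK : K = 1 := by simpa using (congrArg (· univ) h).symm
  rw [h, hK, one_smul]

end WithDensity

theorem MeasureTheory.Measure.ext_of_Iic_of_ne_top {ρ ν : Measure ℝ} (hρ : ∀ x, ρ (Iic x) ≠ ∞)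
    (h : ∀ x, ρ (Iic x) = ν (Iic x)) : ρ = ν := by
  refine ρ.ext_of_Ioc' ν (fun _ q _ => ne_top_of_le_ne_top (hρ q)
    (measure_mono Ioc_subset_Iic_self)) fun x y hxy => ?_
  have hν : ν (Iic x) ≠ ∞ := h x ▸ hρ x
  rw [← Iic_sdiff_Iic, measure_sdiff (Iic_subset_Iic.2 hxy.le) nullMeasurableSet_Iic (hρ x),
    measure_sdiff (Iic_subset_Iic.2 hxy.le) nullMeasurableSet_Iic hν, h, h]

noncomputable def rpowDensity (a : ℝ) : ℝ → ℝ≥0∞ :=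
  (Ioi 0).indicator fun t => ENNReal.ofReal (a * t ^ (a - 1))

@[fun_prop]
theorem measurable_rpowDensity (a : ℝ) : Measurable (rpowDensity a) :=
  Measurable.indicator (by fun_prop) measurableSet_Ioi

theorem withDensity_rpowDensity_Iic {a : ℝ} (ha : 0 < a) (x : ℝ) :
    volume.withDensity (rpowDensity a) (Iic x) = ENNReal.ofReal (max x 0 ^ a) := by
  rw [withDensity_apply _ measurableSet_Iic, rpowDensity, lintegral_indicator measurableSet_Ioi,
    Measure.restrict_restrict measurableSet_Ioi, Ioi_inter_Iic]
  rcases le_total x 0 with hx | hx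
  · rw [Ioc_eq_empty hx.not_gt, Measure.restrict_empty, lintegral_zero_measure, max_eq_right hx,
      Real.zero_rpow ha.ne', ENNReal.ofReal_zero]
  have hint : IntervalIntegrable (fun t => a * t ^ (a - 1)) volume 0 x :=
    (intervalIntegral.intervalIntegrable_rpow' (by linarith)).const_mul a
  have hnonneg : 0 ≤ᵐ[volume.restrict (Ioc 0 x)] fun t => a * t ^ (a - 1) :=
    ae_restrict_of_forall_mem measurableSet_Ioc fun t ht =>
      mul_nonneg ha.le (Real.rpow_nonneg ht.1.le _)
  have hftc : ∫ t in (0)..x, a * t ^ (a - 1) = x ^ a := by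
    rw [intervalIntegral.integral_const_mul, integral_rpow (.inl (by linarith)), sub_add_cancel,
      Real.zero_rpow ha.ne', sub_zero]
    field_simp
  rw [← ofReal_integral_eq_lintegral_ofReal
      ((intervalIntegrable_iff_integrableOn_Ioc_of_le hx).1 hint) hnonneg,
    ← intervalIntegral.integral_of_le hx, hftc, max_eq_left hx]

theorem measure_Iic_zero_eq_zero_of_rpow {ρ : Measure ℝ} {a : ℝ} (ha : 0 < a) (hρ1 : ρ (Iic 1) ≠ ∞)
    (hρ : ∀ x, 0 < x → ρ (Iic x) = ENNReal.ofReal (x ^ a) * ρ (Iic 1)) : ρ (Iic 0) = 0 := by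
  have hcont : Continuous fun x : ℝ => ENNReal.ofReal (x ^ a) * ρ (Iic 1) :=
    (ENNReal.continuous_mul_const hρ1).comp
      (ENNReal.continuous_ofReal.comp (Real.continuous_rpow_const ha.le))
  have hlim := (hcont.tendsto 0).mono_left (nhdsWithin_le_nhds (s := Ioi 0))
  rw [Real.zero_rpow ha.ne', ENNReal.ofReal_zero, zero_mul] at hlim
  refine nonpos_iff_eq_zero.1 (ge_of_tendsto hlim (eventually_nhdsWithin_of_forall fun x hx => ?_))
  rw [← hρ x hx]
  exact measure_mono (Iic_subset_Iic.2 (le_of_lt hx))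

theorem eq_smul_withDensity_rpowDensity {ρ : Measure ℝ} {a : ℝ} (ha : 0 < a)
    (hρ1 : ρ (Iic 1) ≠ ∞) (hρ : ∀ x, 0 < x → ρ (Iic x) = ENNReal.ofReal (x ^ a) * ρ (Iic 1)) :
    ρ = ρ (Iic 1) • volume.withDensity (rpowDensity a) := by
  have hρ0 := measure_Iic_zero_eq_zero_of_rpow ha hρ1 hρ
  have hρ' : ∀ x, ρ (Iic x) = ENNReal.ofReal (max x 0 ^ a) * ρ (Iic 1) := fun x => by
    rcases lt_or_ge 0 x with hx | hx
    · rw [max_eq_left hx.le, hρ x hx]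
    · rw [max_eq_right hx, Real.zero_rpow ha.ne', ENNReal.ofReal_zero, zero_mul]
      exact measure_mono_null (Iic_subset_Iic.2 hx) hρ0
  refine Measure.ext_of_Iic_of_ne_top (fun x => ?_) fun x => ?_
  · rw [hρ']
    exact ENNReal.mul_ne_top ENNReal.ofReal_ne_top hρ1
  · rw [hρ', Measure.smul_apply, withDensity_rpowDensity_Iic ha, smul_eq_mul, mul_comm]

theorem measurable_gammaPDF (a r : ℝ) : Measurable (gammaPDF a r) :=
  (measurable_gammaPDFReal a r).ennreal_ofReal

theorem rpowDensity_mul_exp_ae_eq {a r : ℝ} (ha : 0 < a) (hr : 0 < r) :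
    (fun t => rpowDensity a t * ENNReal.ofReal (Real.exp (-(r * t)))) =ᵐ[volume]
      fun t => ENNReal.ofReal (Real.Gamma (a + 1) / r ^ a) * gammaPDF a r t := by
  filter_upwards [(countable_singleton (0 : ℝ)).ae_notMem volume] with t ht
  rcases (show t ≠ 0 from ht).lt_or_gt with ht | ht
  · rw [rpowDensity, indicator_of_notMem (show t ∉ Ioi 0 from not_lt.2 ht.le), zero_mul,
      gammaPDF_of_neg ht, mul_zero]
  rw [rpowDensity, indicator_of_mem (show t ∈ Ioi 0 from ht), gammaPDF_of_nonneg ht.le,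
    ← ENNReal.ofReal_mul (by positivity), ← ENNReal.ofReal_mul (by positivity),
    Real.Gamma_add_one ha.ne']
  have hΓ := (Real.Gamma_pos_of_pos ha).ne'
  have hra := (Real.rpow_pos_of_pos hr a).ne'
  congr 1
  field_simp

theorem withDensity_rpowDensity_mul_exp {a r : ℝ} (ha : 0 < a) (hr : 0 < r) :
    volume.withDensity (fun t => rpowDensity a t * ENNReal.ofReal (Real.exp (-(r * t)))) =
      ENNReal.ofReal (Real.Gamma (a + 1) / r ^ a) • gammaMeasure a r := by
  rw [withDensity_congr_ae (rpowDensity_mul_exp_ae_eq ha hr), gammaMeasure,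
    ← withDensity_smul _ (measurable_gammaPDF a r)]
  rfl

theorem integral_id_gammaMeasure {a r : ℝ} (ha : 0 < a) (hr : 0 < r) :
    ∫ t, t ∂gammaMeasure a r = a / r := by
  have hpdf : ∀ t ∈ Ioi (0 : ℝ), (gammaPDF a r t).toReal • t =
      r ^ a / Real.Gamma a * (t ^ (a + 1 - 1) * Real.exp (-(r * t))) := fun t ht => by
    rw [gammaPDF, ENNReal.toReal_ofReal (gammaPDFReal_nonneg ha hr t), gammaPDFReal,
      if_pos (le_of_lt ht), add_sub_cancel_right, smul_eq_mul,
      Real.rpow_sub ht, Real.rpow_one]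
    have ht0 : t ≠ 0 := (mem_Ioi.1 ht).ne'
    field_simp
  rw [gammaMeasure, integral_withDensity_eq_integral_toReal_smul (measurable_gammaPDF a r)
      (ae_of_all _ fun _ => ENNReal.ofReal_lt_top),
    ← setIntegral_eq_integral_of_forall_compl_eq_zero (s := Ioi 0) fun t ht => ?_,
    setIntegral_congr_fun measurableSet_Ioi hpdf, integral_const_mul,
    Real.integral_rpow_mul_exp_neg_mul_Ioi (by linarith) hr, Real.Gamma_add_one ha.ne',
    one_div, Real.inv_rpow hr.le, Real.rpow_add hr, Real.rpow_one]
  · have hΓ := (Real.Gamma_pos_of_pos ha).ne'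
    have hra := (Real.rpow_pos_of_pos hr a).ne'
    field_simp
  · rcases (not_lt.1 (show ¬0 < t from ht)).lt_or_eq with ht | rfl
    · rw [gammaPDF_of_neg ht, ENNReal.toReal_zero, zero_smul]
    · rw [smul_zero]

section Seminorm

variable {E : Type*} [NormedAddCommGroup E] [NormedSpace ℝ E] (p : Seminorm ℝ E)

theorem Seminorm.preimage_sq_Iic {x : ℝ} (hx : 0 ≤ x) :
    (fun z => p z ^ 2) ⁻¹' Iic x = p.closedBall 0 (Real.sqrt x) := by
  ext z
  rw [mem_preimage, mem_Iic, p.mem_closedBall_zero, Real.le_sqrt (apply_nonneg p z) hx]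

variable [MeasurableSpace E] [BorelSpace E] [FiniteDimensional ℝ E] (μ : Measure E)
  [μ.IsAddHaarMeasure]

theorem Seminorm.addHaar_closedBall_zero {r : ℝ} (hr : 0 < r) :
    μ (p.closedBall 0 r) = ENNReal.ofReal (r ^ finrank ℝ E) * μ (p.closedBall 0 1) := by
  rw [← Measure.addHaar_smul_of_nonneg μ hr.le, p.smul_closedBall_zero (by simpa using hr.ne'),
    Real.norm_of_nonneg hr.le, mul_one]

theorem Seminorm.map_sq_Iic (hp : Measurable p) {x : ℝ} (hx : 0 < x) :
    μ.map (fun z => p z ^ 2) (Iic x) =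
      ENNReal.ofReal (x ^ (finrank ℝ E / 2 : ℝ)) * μ.map (fun z => p z ^ 2) (Iic 1) := by
  have hT : Measurable fun z => p z ^ 2 := hp.pow_const 2
  rw [Measure.map_apply hT measurableSet_Iic, Measure.map_apply hT measurableSet_Iic,
    p.preimage_sq_Iic hx.le, p.preimage_sq_Iic zero_le_one, Real.sqrt_one,
    p.addHaar_closedBall_zero μ (Real.sqrt_pos.2 hx), ← Real.rpow_natCast, Real.sqrt_eq_rpow,
    ← Real.rpow_mul hx.le, one_div_mul_eq_div]

theorem Seminorm.map_sq_withDensity_exp (hp : Measurable p) (hE : 0 < finrank ℝ E) {c r : ℝ}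
    (hc : 0 < c) (hr : 0 < r)
    [IsProbabilityMeasure
      (μ.withDensity fun z => ENNReal.ofReal (c * Real.exp (-(r * p z ^ 2))))] :
    (μ.withDensity fun z => ENNReal.ofReal (c * Real.exp (-(r * p z ^ 2)))).map (fun z => p z ^ 2)
      = gammaMeasure (finrank ℝ E / 2) r := by
  set ν := μ.withDensity fun z => ENNReal.ofReal (c * Real.exp (-(r * p z ^ 2))) with hν
  set a : ℝ := finrank ℝ E / 2
  have ha : 0 < a := by positivity
  have hT : Measurable fun z => p z ^ 2 := hp.pow_const 2
  set ρ := μ.map fun z => p z ^ 2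
  set g : ℝ → ℝ≥0∞ := fun t => ENNReal.ofReal c * ENNReal.ofReal (Real.exp (-(r * t)))
  have hg : Measurable g := by fun_prop
  have hmap : ν.map (fun z => p z ^ 2) = ρ.withDensity g := by
    rw [← Measure.map_withDensity_comp _ hT hg, hν]
    congr with z
    exact ENNReal.ofReal_mul hc.le
  have := Measure.isProbabilityMeasure_map (μ := ν) hT.aemeasurable
  set V := ρ (Iic 1)
  have hV : V ≠ ∞ :=
    measure_ne_top_of_withDensity_ne_top measurableSet_Iic (g := g) (m := g 1)
      (mul_ne_zero (ENNReal.ofReal_pos.2 hc).ne' (ENNReal.ofReal_pos.2 (Real.exp_pos _)).ne')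
      (fun t (ht : t ≤ 1) => by simp only [g]; gcongr) (hmap ▸ measure_ne_top _ _)
  have hdens : rpowDensity a * g = ENNReal.ofReal c •
      fun t => rpowDensity a t * ENNReal.ofReal (Real.exp (-(r * t))) := by
    funext t
    simp only [Pi.mul_apply, Pi.smul_apply, smul_eq_mul, g]
    ring
  have := isProbabilityMeasure_gammaMeasure ha hr
  refine Measure.eq_of_eq_smul_of_isProbabilityMeasure (K := V * (ENNReal.ofReal c *
    ENNReal.ofReal (Real.Gamma (a + 1) / r ^ a))) ?_
  rw [hmap, eq_smul_withDensity_rpowDensity ha hV (fun x hx => p.map_sq_Iic μ hp hx),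
    withDensity_smul_measure, ← withDensity_mul _ (measurable_rpowDensity a) hg, hdens,
    withDensity_smul _ (by fun_prop), withDensity_rpowDensity_mul_exp ha hr, smul_smul,
    smul_smul, mul_assoc]

end Seminorm

theorem generalized_gaussian_norm_sq_gamma_general
    (d : ℕ) (hd : 0 < d) (σ : ℝ) (hσ : 0 < σ)
    (N : EuclideanSpace ℝ (Fin d) → ℝ)
    (hN_add : ∀ x y, N (x + y) ≤ N x + N y)
    (hN_smul : ∀ (r : ℝ) x, N (r • x) = |r| * N x)
    (hN_cont : Continuous N)
    (c : ℝ) (hc : 0 < c)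
    (μ : Measure (EuclideanSpace ℝ (Fin d)))
    (hμ : μ = volume.withDensity
      (fun z => ENNReal.ofReal (c * Real.exp (-(N z) ^ 2 / (2 * σ ^ 2)))))
    (hprob : IsProbabilityMeasure μ) :
    μ.map (fun z => (N z) ^ 2) = gammaMeasure ((d : ℝ) / 2) (1 / (2 * σ ^ 2)) ∧
      ∫ z, (N z) ^ 2 ∂μ = σ ^ 2 * d := by
  set p : Seminorm ℝ (EuclideanSpace ℝ (Fin d)) := Seminorm.of N hN_add hN_smul
  have hpN : ⇑p = N := rfl
  have hμ' : μ = volume.withDensity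
      fun z => ENNReal.ofReal (c * Real.exp (-(1 / (2 * σ ^ 2) * p z ^ 2))) := by
    rw [hμ, hpN]
    congr with z
    ring_nf
  rw [hμ'] at hprob
  have hlaw := p.map_sq_withDensity_exp volume hN_cont.measurable (by simpa using hd) hc
    (by positivity : 0 < 1 / (2 * σ ^ 2))
  rw [finrank_euclideanSpace_fin, ← hμ', hpN] at hlaw
  refine ⟨hlaw, ?_⟩
  calc ∫ z, N z ^ 2 ∂μ = ∫ t, t ∂(μ.map fun z => N z ^ 2) :=
        (integral_map (hN_cont.measurable.pow_const 2).aemeasurable aestronglyMeasurable_id).symm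
    _ = σ ^ 2 * d := by
      rw [hlaw, integral_id_gammaMeasure (by positivity) (by positivity)]
      field_simp

theorem generalized_gaussian_norm_sq_gamma
    (d : ℕ) (hd : 0 < d) (σ : ℝ) (hσ : 0 < σ)
    (N : EuclideanSpace ℝ (Fin d) → ℝ)
    (hN_add : ∀ x y, N (x + y) ≤ N x + N y)
    (hN_smul : ∀ (r : ℝ) x, N (r • x) = |r| * N x)
    (hN_eq : ∀ x, N x = 0 → x = 0)
    (hN_cont : Continuous N)
    (c : ℝ) (hc : 0 < c)
    (μ : Measure (EuclideanSpace ℝ (Fin d)))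
    (hμ : μ = volume.withDensity
      (fun z => ENNReal.ofReal (c * Real.exp (-(N z) ^ 2 / (2 * σ ^ 2)))))
    (hprob : IsProbabilityMeasure μ) :
    μ.map (fun z => (N z) ^ 2) = gammaMeasure ((d : ℝ) / 2) (1 / (2 * σ ^ 2)) ∧
      ∫ z, (N z) ^ 2 ∂μ = σ ^ 2 * d :=
  generalized_gaussian_norm_sq_gamma_general d hd σ hσ N hN_add hN_smul hN_cont c hc μ hμ hprob
end

section
/- Let ζ_1, ..., ζ_t be an ℝ^d-valued martingale difference sequence with respect to a filtration (𝔉_τ), i.e., E[ζ_τ | 𝔉_{τ−1}] = 0, and suppose ‖ζ_τ‖_2 ≤ c_τ almost surely. Then for every λ > 0, P(‖Σ_{τ=1}^{t} ζ_τ‖_2 ≥ λ) ≤ 4 exp(−λ²/(4 Σ_{τ=1}^{t} c_τ²)). -/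
/-!
Pinelis's argument: for `‖y‖ ≤ c` one has
`cosh ‖x + y‖ ≤ cosh ‖x‖ * cosh c + K(‖x‖, c) * ⟪x, y⟫` with `K(a, c) = sinh a * sinh c / (a * c)`.
Writing `‖x + y‖² = ‖x‖² + 2⟪x, y⟫ + ‖y‖²`, this is the convexity of `t ↦ cosh √t` on the segment
from `(‖x‖ - c)²` to `(‖x‖ + c)²`, where the bound is an equality at both ends. Applied to the
partial sums of the martingale differences, the second term has zero mean because `K(‖x‖, c) • x` is
measurable with respect to the past, so `E cosh (r ‖∑ ζ‖) ≤ ∏ cosh (r c_τ) ≤ exp (r² ∑ c_τ² / 2)`.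
Markov's inequality with `r = l / ∑ c_τ²` gives the sharper bound `2 exp (-l² / (2 ∑ c_τ²))`.
-/

open MeasureTheory Real Set
open scoped RealInnerProductSpace

theorem convexOn_sinh_Ici : ConvexOn ℝ (Ici 0) sinh := by
  refine MonotoneOn.convexOn_of_deriv (convex_Ici 0) continuous_sinh.continuousOn
    differentiable_sinh.differentiableOn ?_
  rw [Real.deriv_sinh, interior_Ici]
  intro u hu v hv huv
  exact cosh_le_cosh.2 (by rwa [abs_of_pos hu, abs_of_pos hv])

theorem monotoneOn_sinh_div_self : MonotoneOn (fun u => sinh u / u) (Ioi 0) := by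
  intro u hu v hv huv
  simpa using convexOn_sinh_Ici.secant_mono self_mem_Ici (mem_Ici.2 (le_of_lt hu))
    (mem_Ici.2 (le_of_lt hv)) (ne_of_gt hu) (ne_of_gt hv) huv

theorem hasDerivAt_cosh_sqrt {t : ℝ} (ht : 0 < t) :
    HasDerivAt (fun t => cosh √t) (sinh √t / √t / 2) t :=
  ((hasDerivAt_cosh √t).comp t (hasDerivAt_sqrt ht.ne')).congr_deriv (by ring)

theorem convexOn_cosh_sqrt : ConvexOn ℝ (Ici 0) (fun t => cosh √t) := by
  refine MonotoneOn.convexOn_of_deriv (convex_Ici 0) (by fun_prop) ?_ ?_ <;> rw [interior_Ici]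
  · exact fun t ht => (hasDerivAt_cosh_sqrt ht).differentiableAt.differentiableWithinAt
  · intro s hs t ht hst
    rw [(hasDerivAt_cosh_sqrt hs).deriv, (hasDerivAt_cosh_sqrt ht).deriv]
    have := monotoneOn_sinh_div_self (sqrt_pos.2 hs) (sqrt_pos.2 ht) (sqrt_le_sqrt hst)
    linarith

/-- At `a * c = 0` the division by zero makes this `0`, which is the value the inequalities below
need there. -/
noncomputable def pinelisCoeff (a c : ℝ) : ℝ := sinh a * sinh c / (a * c)

theorem pinelisCoeff_nonneg {a c : ℝ} (ha : 0 ≤ a) (hc : 0 ≤ c) : 0 ≤ pinelisCoeff a c :=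
  div_nonneg (mul_nonneg (sinh_nonneg_iff.2 ha) (sinh_nonneg_iff.2 hc)) (mul_nonneg ha hc)

theorem measurable_pinelisCoeff_left (c : ℝ) : Measurable fun a => pinelisCoeff a c := by
  unfold pinelisCoeff
  fun_prop

theorem abs_pinelisCoeff_mul_le {a c s : ℝ} (ha : 0 ≤ a) (hc : 0 ≤ c) (hs : |s| ≤ a * c) :
    |pinelisCoeff a c * s| ≤ sinh a * sinh c := by
  have hK := pinelisCoeff_nonneg ha hc
  rw [abs_mul, abs_of_nonneg hK]
  refine (mul_le_mul_of_nonneg_left hs hK).trans ?_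
  rcases (mul_nonneg ha hc).eq_or_lt with hac | hac
  · rw [← hac, mul_zero]
    exact mul_nonneg (sinh_nonneg_iff.2 ha) (sinh_nonneg_iff.2 hc)
  · rw [pinelisCoeff, div_mul_cancel₀ _ hac.ne']

theorem cosh_sqrt_le_pinelis {a c s : ℝ} (ha : 0 ≤ a) (hc : 0 ≤ c) (hs : |s| ≤ a * c) :
    cosh √(a ^ 2 + 2 * s + c ^ 2) ≤ cosh a * cosh c + pinelisCoeff a c * s := by
  rcases (mul_nonneg ha hc).eq_or_lt with hac | hac
  · obtain rfl : s = 0 := abs_nonpos_iff.1 (hac ▸ hs)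
    rcases mul_eq_zero.1 hac.symm with rfl | rfl
    · simp [sqrt_sq hc]
    · simp [sqrt_sq ha]
  have ha' : a ≠ 0 := left_ne_zero_of_mul hac.ne'
  have hc' : c ≠ 0 := right_ne_zero_of_mul hac.ne'
  set θ := (a * c + s) / (2 * (a * c))
  have hθ0 : 0 ≤ θ := div_nonneg (by linarith [neg_abs_le s]) (by positivity)
  have hθ1 : θ ≤ 1 := (div_le_one (by positivity)).2 (by linarith [le_abs_self s])
  have hconv := convexOn_cosh_sqrt.2 (mem_Ici.2 (sq_nonneg (a - c)))
    (mem_Ici.2 (sq_nonneg (a + c))) (sub_nonneg.2 hθ1) hθ0 (by ring)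
  have harg : (1 - θ) • (a - c) ^ 2 + θ • (a + c) ^ 2 = a ^ 2 + 2 * s + c ^ 2 := by
    simp only [smul_eq_mul, θ]
    field_simp
    ring
  dsimp only at hconv
  rw [harg, smul_eq_mul, smul_eq_mul, sqrt_sq_eq_abs, cosh_abs, sqrt_sq (by positivity),
    cosh_sub, cosh_add] at hconv
  refine hconv.trans (le_of_eq ?_)
  simp only [pinelisCoeff, θ]
  field_simp
  ring

section InnerProductSpace

variable {E : Type*} [NormedAddCommGroup E] [InnerProductSpace ℝ E]

theorem abs_real_inner_le_norm_mul_of_norm_le (x : E) {y : E} {c : ℝ} (hy : ‖y‖ ≤ c) :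
    |⟪x, y⟫| ≤ ‖x‖ * c :=
  (abs_real_inner_le_norm x y).trans (mul_le_mul_of_nonneg_left hy (norm_nonneg x))

theorem cosh_norm_add_le_pinelis {x y : E} {c : ℝ} (hy : ‖y‖ ≤ c) :
    cosh ‖x + y‖ ≤ cosh ‖x‖ * cosh c + pinelisCoeff ‖x‖ c * ⟪x, y⟫ := by
  refine le_trans ?_ (cosh_sqrt_le_pinelis (norm_nonneg x) ((norm_nonneg y).trans hy)
    (abs_real_inner_le_norm_mul_of_norm_le x hy))
  rw [cosh_le_cosh, abs_of_nonneg (norm_nonneg _), abs_of_nonneg (sqrt_nonneg _),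
    ← sqrt_sq (norm_nonneg (x + y)), norm_add_sq_real]
  gcongr

end InnerProductSpace

section Probability

variable {Ω : Type*} {m m0 : MeasurableSpace Ω} {μ : Measure Ω}

theorem measure_norm_ge_le_of_integrable_cosh {E : Type*} [NormedAddCommGroup E]
    [IsFiniteMeasure μ] {f : Ω → E} {r l : ℝ} (hr : 0 ≤ r) (hl : 0 ≤ l)
    (hint : Integrable (fun ω => cosh (r * ‖f ω‖)) μ) :
    μ {ω | l ≤ ‖f ω‖} ≤ ENNReal.ofReal (2 * exp (-(r * l)) * ∫ ω, cosh (r * ‖f ω‖) ∂μ) := by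
  have hsub : {ω | l ≤ ‖f ω‖} ⊆ {ω | cosh (r * l) ≤ cosh (r * ‖f ω‖)} := fun ω hω => by
    rw [mem_ofPred_eq, cosh_le_cosh, abs_of_nonneg (by positivity), abs_of_nonneg (by positivity)]
    exact mul_le_mul_of_nonneg_left hω hr
  have hmarkov := mul_meas_ge_le_integral_of_nonneg (.of_forall fun ω => (cosh_pos _).le) hint
    (cosh (r * l))
  have hcosh : 1 ≤ 2 * exp (-(r * l)) * cosh (r * l) := by
    have hinv : exp (-(r * l)) * exp (r * l) = 1 := by rw [← exp_add, neg_add_cancel, exp_zero]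
    rw [cosh_eq]
    nlinarith [exp_pos (-(r * l))]
  refine (measure_mono hsub).trans ?_
  rw [← ofReal_measureReal]
  gcongr
  calc μ.real _ ≤ 2 * exp (-(r * l)) * cosh (r * l) * μ.real _ :=
        le_mul_of_one_le_left (by positivity) hcosh
    _ = 2 * exp (-(r * l)) * (cosh (r * l) * μ.real _) := by ring
    _ ≤ 2 * exp (-(r * l)) * ∫ ω, cosh (r * ‖f ω‖) ∂μ := by gcongr

theorem prod_cosh_le_exp_sum_sq {ι : Type*} (s : Finset ι) (x : ι → ℝ) :
    ∏ i ∈ s, cosh (x i) ≤ exp ((∑ i ∈ s, x i ^ 2) / 2) := by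
  rw [Finset.sum_div, exp_sum]
  exact Finset.prod_le_prod (fun i _ => (cosh_pos _).le) fun i _ => cosh_le_exp_half_sq _

variable {E : Type*} [NormedAddCommGroup E] [InnerProductSpace ℝ E] [CompleteSpace E]

theorem integral_inner_eq_zero_of_condExp_eq_zero [IsFiniteMeasure μ] (hm : m ≤ m0)
    {V ζ : Ω → E} (hV : StronglyMeasurable[m] V) (hVζ : Integrable (fun ω => ⟪V ω, ζ ω⟫) μ)
    (hζ : Integrable ζ μ) (hζ0 : μ[ζ|m] =ᵐ[μ] 0) : ∫ ω, ⟪V ω, ζ ω⟫ ∂μ = 0 := by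
  have hpull : μ[fun ω => ⟪V ω, ζ ω⟫|m] =ᵐ[μ] fun ω => ⟪V ω, μ[ζ|m] ω⟫ :=
    condExp_bilin_of_stronglyMeasurable_left (innerSL ℝ) hV hVζ hζ
  rw [← integral_condExp hm, integral_congr_ae hpull]
  refine integral_eq_zero_of_ae ?_
  filter_upwards [hζ0] with ω hω
  simp [hω]

theorem integral_cosh_norm_add_le_of_condExp_eq_zero [IsFiniteMeasure μ] (hm : m ≤ m0)
    {S ζ : Ω → E} {c : ℝ} (hS : StronglyMeasurable[m] S)
    (hSint : Integrable (fun ω => cosh ‖S ω‖) μ) (hζ : AEStronglyMeasurable ζ μ)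
    (hζc : ∀ᵐ ω ∂μ, ‖ζ ω‖ ≤ c) (hζ0 : μ[ζ|m] =ᵐ[μ] 0) :
    Integrable (fun ω => cosh ‖S ω + ζ ω‖) μ ∧
      ∫ ω, cosh ‖S ω + ζ ω‖ ∂μ ≤ (∫ ω, cosh ‖S ω‖ ∂μ) * cosh c := by
  set V : Ω → E := fun ω => pinelisCoeff ‖S ω‖ c • S ω
  have hV : StronglyMeasurable[m] V :=
    ((measurable_pinelisCoeff_left c).comp hS.norm.measurable).stronglyMeasurable.smul hS
  have hVζ : Integrable (fun ω => ⟪V ω, ζ ω⟫) μ := by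
    refine (hSint.mul_const (sinh c)).mono' ((hV.mono hm).aestronglyMeasurable.inner hζ) ?_
    filter_upwards [hζc] with ω hω
    have hc : 0 ≤ c := (norm_nonneg _).trans hω
    rw [real_inner_smul_left, norm_eq_abs]
    exact (abs_pinelisCoeff_mul_le (norm_nonneg _) hc
      (abs_real_inner_le_norm_mul_of_norm_le _ hω)).trans
      (mul_le_mul_of_nonneg_right (sinh_lt_cosh _).le (sinh_nonneg_iff.2 hc))
  have hζint : Integrable ζ μ := (integrable_const c).mono' hζ hζc
  have hbound : Integrable (fun ω => cosh ‖S ω‖ * cosh c + ⟪V ω, ζ ω⟫) μ :=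
    (hSint.mul_const _).add hVζ
  have hpinelis : ∀ᵐ ω ∂μ, cosh ‖S ω + ζ ω‖ ≤ cosh ‖S ω‖ * cosh c + ⟪V ω, ζ ω⟫ := by
    filter_upwards [hζc] with ω hω
    rw [real_inner_smul_left]
    exact cosh_norm_add_le_pinelis hω
  have hmeas : AEStronglyMeasurable (fun ω => cosh ‖S ω + ζ ω‖) μ :=
    continuous_cosh.comp_aestronglyMeasurable ((hS.mono hm).aestronglyMeasurable.add hζ).norm
  refine ⟨hbound.mono' hmeas ?_, ?_⟩
  · filter_upwards [hpinelis] with ω hω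
    rwa [norm_of_nonneg (cosh_pos _).le]
  calc ∫ ω, cosh ‖S ω + ζ ω‖ ∂μ ≤ ∫ ω, cosh ‖S ω‖ * cosh c + ⟪V ω, ζ ω⟫ ∂μ :=
        integral_mono_of_nonneg (.of_forall fun ω => (cosh_pos _).le) hbound hpinelis
    _ = (∫ ω, cosh ‖S ω‖ ∂μ) * cosh c := by
        rw [integral_add (hSint.mul_const _) hVζ, integral_mul_const,
          integral_inner_eq_zero_of_condExp_eq_zero hm hV hVζ hζint hζ0, add_zero]

variable [IsProbabilityMeasure μ] (ℱ : Filtration ℕ m0) {ζ : ℕ → Ω → E}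
  (hadapted : ∀ τ, StronglyMeasurable[ℱ τ] (ζ τ)) {c : ℕ → ℝ} (t : ℕ)
  (hmds : ∀ τ ∈ Finset.Icc 1 t, μ[ζ τ | ℱ (τ - 1)] =ᵐ[μ] 0)
  (hbdd : ∀ τ ∈ Finset.Icc 1 t, ∀ᵐ ω ∂μ, ‖ζ τ ω‖ ≤ c τ)
include hadapted hmds hbdd

theorem integral_cosh_norm_sum_le :
    Integrable (fun ω => cosh ‖∑ τ ∈ Finset.Icc 1 t, ζ τ ω‖) μ ∧
      ∫ ω, cosh ‖∑ τ ∈ Finset.Icc 1 t, ζ τ ω‖ ∂μ ≤ ∏ τ ∈ Finset.Icc 1 t, cosh (c τ) := by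
  induction t with
  | zero => simp
  | succ n ih =>
    have hsub : Finset.Icc 1 n ⊆ Finset.Icc 1 (n + 1) := Finset.Icc_subset_Icc_right n.le_succ
    have hlast : n + 1 ∈ Finset.Icc 1 (n + 1) := Finset.mem_Icc.2 ⟨Nat.le_add_left 1 n, le_rfl⟩
    obtain ⟨hint, hle⟩ := ih (fun τ hτ => hmds τ (hsub hτ)) (fun τ hτ => hbdd τ (hsub hτ))
    have hS : StronglyMeasurable[ℱ n] fun ω => ∑ τ ∈ Finset.Icc 1 n, ζ τ ω :=
      Finset.stronglyMeasurable_fun_sum _ fun τ hτ =>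
        (hadapted τ).mono (ℱ.mono (Finset.mem_Icc.1 hτ).2)
    obtain ⟨hint', hstep⟩ := integral_cosh_norm_add_le_of_condExp_eq_zero (ℱ.le n) hS hint
      ((hadapted _).mono (ℱ.le _)).aestronglyMeasurable (hbdd _ hlast)
      (by simpa using hmds _ hlast)
    simp_rw [Finset.sum_Icc_succ_top (Nat.le_add_left 1 n),
      Finset.prod_Icc_succ_top (Nat.le_add_left 1 n)]
    exact ⟨hint', hstep.trans (mul_le_mul_of_nonneg_right hle (cosh_pos _).le)⟩

theorem integral_cosh_mul_norm_sum_le {r : ℝ} (hr : 0 ≤ r) :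
    Integrable (fun ω => cosh (r * ‖∑ τ ∈ Finset.Icc 1 t, ζ τ ω‖)) μ ∧
      ∫ ω, cosh (r * ‖∑ τ ∈ Finset.Icc 1 t, ζ τ ω‖) ∂μ ≤
        ∏ τ ∈ Finset.Icc 1 t, cosh (r * c τ) := by
  have hscaled := integral_cosh_norm_sum_le ℱ (ζ := fun τ => r • ζ τ) (c := fun τ => r * c τ)
    (fun τ => (hadapted τ).const_smul r) t
    (fun τ hτ => (condExp_smul r (ζ τ) _).trans (by filter_upwards [hmds τ hτ] with ω hω; simp [hω]))
    (fun τ hτ => by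
      filter_upwards [hbdd τ hτ] with ω hω
      rw [Pi.smul_apply, norm_smul, norm_of_nonneg hr]
      gcongr)
  simpa only [Pi.smul_apply, ← Finset.smul_sum, norm_smul, norm_of_nonneg hr] using hscaled

theorem measure_norm_sum_ge_le {l : ℝ} (hl : 0 ≤ l) :
    μ {ω | l ≤ ‖∑ τ ∈ Finset.Icc 1 t, ζ τ ω‖} ≤
      ENNReal.ofReal (2 * exp (-l ^ 2 / (2 * ∑ τ ∈ Finset.Icc 1 t, c τ ^ 2))) := by
  set σ2 := ∑ τ ∈ Finset.Icc 1 t, c τ ^ 2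
  have hσ0 : 0 ≤ σ2 := Finset.sum_nonneg fun τ _ => sq_nonneg (c τ)
  rcases hσ0.eq_or_lt with hσ | hσ
  · -- `-l ^ 2 / 0 = 0`, so the bound is `2`.
    rw [← hσ, mul_zero, div_zero, exp_zero]
    exact prob_le_one.trans (by norm_num)
  set r := l / σ2 with hr_def
  have hr : 0 ≤ r := by positivity
  obtain ⟨hint, hmom⟩ := integral_cosh_mul_norm_sum_le ℱ hadapted t hmds hbdd hr
  have hexp : -(r * l) + (∑ τ ∈ Finset.Icc 1 t, (r * c τ) ^ 2) / 2 = -l ^ 2 / (2 * σ2) := by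
    simp_rw [mul_pow, ← Finset.mul_sum, hr_def]
    field_simp
    ring
  calc μ {ω | l ≤ ‖∑ τ ∈ Finset.Icc 1 t, ζ τ ω‖}
      ≤ ENNReal.ofReal (2 * exp (-(r * l)) * ∫ ω, cosh (r * ‖∑ τ ∈ Finset.Icc 1 t, ζ τ ω‖) ∂μ) :=
        measure_norm_ge_le_of_integrable_cosh hr hl hint
    _ ≤ ENNReal.ofReal (2 * exp (-l ^ 2 / (2 * σ2))) := by
        rw [← hexp, exp_add, mul_assoc]
        gcongr
        exact hmom.trans (prod_cosh_le_exp_sum_sq _ _)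

end Probability

theorem pinelis_azuma
    {Ω : Type*} {m : MeasurableSpace Ω} (μ : Measure Ω) [IsProbabilityMeasure μ]
    (ℱ : Filtration ℕ m) (d : ℕ)
    (ζ : ℕ → Ω → EuclideanSpace ℝ (Fin d))
    (hadapted : ∀ τ, StronglyMeasurable[ℱ τ] (ζ τ))
    (t : ℕ) (c : ℕ → ℝ)
    (hmds : ∀ τ ∈ Finset.Icc 1 t, μ[ζ τ | ℱ (τ - 1)] =ᵐ[μ] 0)
    (hbdd : ∀ τ ∈ Finset.Icc 1 t, ∀ᵐ ω ∂μ, ‖ζ τ ω‖ ≤ c τ)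
    (l : ℝ) (hl : 0 < l) :
    μ {ω | l ≤ ‖∑ τ ∈ Finset.Icc 1 t, ζ τ ω‖}
      ≤ ENNReal.ofReal (4 * Real.exp (-l ^ 2 / (4 * ∑ τ ∈ Finset.Icc 1 t, (c τ) ^ 2))) := by
  refine (measure_norm_sum_ge_le ℱ hadapted t hmds hbdd hl.le).trans
    (ENNReal.ofReal_le_ofReal (mul_le_mul (by norm_num) (exp_le_exp.2 ?_) (exp_pos _).le
      (by norm_num)))
  have hx : 0 ≤ l ^ 2 / (2 * ∑ τ ∈ Finset.Icc 1 t, c τ ^ 2) := by positivity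
  rw [neg_div, neg_div, neg_le_neg_iff, show l ^ 2 / (4 * ∑ τ ∈ Finset.Icc 1 t, c τ ^ 2)
      = l ^ 2 / (2 * ∑ τ ∈ Finset.Icc 1 t, c τ ^ 2) / 2 by ring]
  linarith
end

section
/- Induction lemma for Frank–Wolfe under strong convexity: suppose a nonnegative sequence h_t satisfies, for all t ≥ 1, h_{t+1} ≤ h_t − (γ√(2μ)/(t+1))√h_t + C_1/(t+1)^{3/2} + C_2/(t+1)² whenever √h_t > γ√(2μ)/(t+1), and h_{t+1} ≤ C_1/(t+1)^{3/2} + C_2/(t+1)² otherwise; assume additionally C_1, C_2 ≤ βD⁰²-type bounds with βD² ≥ γ²μ and that h_t ≤ 3(βD² + C_1 + C_2)/√(t+1) for all t. Then with B := 9(βD² + C_1 + C_2)²/(γ²μ), we have h_t ≤ B/(t+1) for all t ≥ 1. -/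
/-! Write `κ = γ²μ`, `M = βD² + C₁ + C₂` and `B = 9M²/κ`, and induct on `h t ≤ B/(t+1)` with
`n = t + 1`. If `B ≥ 3M√(n+1)`, the a priori bound `3M/√(n+1)` already gives the claim. Otherwise
`B/(n(n+1)) ≤ 3M/n^{3/2}`, and this is what the progress term pays for: `x ↦ x - a√x` is increasing
once `√x ≥ a`, so the induction hypothesis may be inserted into the recursion, and at `x = B/n`
the progress term `(√(2κ)/n)√(B/n)` equals `3√2·M/n^{3/2}`, which beats both the loss
`B/n - B/(n+1)` and the noise `M/n^{3/2}`. -/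

lemma sub_mul_sqrt_le_sub_mul_sqrt {a x y : ℝ} (ha : a ≤ √x) (hxy : x ≤ y) :
    x - a * √x ≤ y - a * √y := by
  have hsqrt : √x ≤ √y := Real.sqrt_le_sqrt hxy
  rcases le_total x 0 with hx | hx
  · rw [Real.sqrt_eq_zero_of_nonpos hx] at ha ⊢
    nlinarith [Real.sqrt_nonneg y]
  · nlinarith [Real.sq_sqrt hx, Real.sq_sqrt (hx.trans hxy),
      mul_nonneg (sub_nonneg.2 hsqrt) (show 0 ≤ √y + √x - a by linarith [Real.sqrt_nonneg y])]

lemma rpow_three_halves {n : ℝ} (hn : 0 ≤ n) : n ^ ((3 : ℝ) / 2) = n * √n := by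
  rw [show (3 : ℝ) / 2 = 1 + 1 / 2 by norm_num, Real.rpow_add' hn (by norm_num), Real.rpow_one,
    Real.sqrt_eq_rpow]

lemma div_rpow_three_halves_add_div_sq_le {a b n : ℝ} (hb : 0 ≤ b) (hn : 1 ≤ n) :
    a / n ^ ((3 : ℝ) / 2) + b / n ^ 2 ≤ (a + b) / (n * √n) := by
  have hsqrt : √n ≤ n := Real.sqrt_le_self_iff.2 (Or.inr hn)
  rw [rpow_three_halves (by linarith), add_div]
  gcongr
  rw [sq]
  gcongr

lemma nine_mul_le_nine_mul_sq_div {κ M : ℝ} (hκ : 0 < κ) (hκM : κ ≤ M) :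
    9 * M ≤ 9 * M ^ 2 / κ := by
  rw [le_div_iff₀ hκ]
  nlinarith

lemma le_div_of_le_div_sqrt {c B m y : ℝ} (hm : 0 < m) (hy : y ≤ c / √m) (hc : c * √m ≤ B) :
    y ≤ B / m := by
  have hsqrt : 0 < √m := Real.sqrt_pos.2 hm
  refine hy.trans ?_
  rw [div_le_div_iff₀ hsqrt hm]
  calc c * m = c * √m * √m := by rw [mul_assoc, Real.mul_self_sqrt hm.le]
    _ ≤ B * √m := by gcongr

lemma le_div_succ_of_le_noise {κ M n y : ℝ} (hκ : 0 < κ) (hκM : κ ≤ M) (hn : 1 ≤ n)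
    (hy : y ≤ M / (n * √n)) : y ≤ 9 * M ^ 2 / κ / (n + 1) := by
  have hM : 0 ≤ M := hκ.le.trans hκM
  calc y ≤ M / (n * √n) := hy
    _ ≤ M / n := by gcongr; exact le_mul_of_one_le_right (by linarith) (Real.one_le_sqrt.2 hn)
    _ ≤ 9 * M / (n + 1) := by
      rw [div_le_div_iff₀ (by linarith) (by linarith)]
      nlinarith
    _ ≤ 9 * M ^ 2 / κ / (n + 1) := by gcongr; exact nine_mul_le_nine_mul_sq_div hκ hκM

lemma sqrt_two_mul_div_mul_sqrt_div_eq {κ M n : ℝ} (hκ : 0 < κ) (hM : 0 ≤ M) (hn : 0 < n) :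
    √(2 * κ) / n * √(9 * M ^ 2 / κ / n) = 3 * √2 * M / (n * √n) := by
  have hsqrt : √(9 * M ^ 2 / κ / n) = 3 * M / (√κ * √n) := by
    rw [Real.sqrt_div' _ hn.le, Real.sqrt_div' _ hκ.le,
      show 9 * M ^ 2 = (3 * M) ^ 2 by ring, Real.sqrt_sq (by positivity), div_div]
  have hκ' : 0 < √κ := Real.sqrt_pos.2 hκ
  have hn' : 0 < √n := Real.sqrt_pos.2 hn
  rw [hsqrt, Real.sqrt_mul zero_le_two]
  field_simp

lemma le_div_succ_of_descent {κ M n x y : ℝ} (hκ : 0 < κ) (hM : 0 ≤ M) (hn : 0 < n)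
    (hx : x ≤ 9 * M ^ 2 / κ / n) (hxlarge : √(2 * κ) / n ≤ √x)
    (hy : y ≤ x - √(2 * κ) / n * √x + M / (n * √n))
    (hB : 9 * M ^ 2 / κ ≤ 3 * M * √(n + 1)) :
    y ≤ 9 * M ^ 2 / κ / (n + 1) := by
  set B := 9 * M ^ 2 / κ
  have hn' : 0 < √n := Real.sqrt_pos.2 hn
  have hdescent : y ≤ B / n - 3 * √2 * M / (n * √n) + M / (n * √n) := by
    rw [← sqrt_two_mul_div_mul_sqrt_div_eq hκ hM hn]
    linarith [sub_mul_sqrt_le_sub_mul_sqrt hxlarge hx]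
  have hloss : B / n - B / (n + 1) ≤ 3 * M / (n * √n) := by
    have hsqrt : √n * √(n + 1) ≤ n + 1 := by
      calc √n * √(n + 1) ≤ √(n + 1) * √(n + 1) := by gcongr; linarith
        _ = n + 1 := Real.mul_self_sqrt (by linarith)
    have hgap : B / n - B / (n + 1) = B / (n * (n + 1)) := by
      field_simp
      ring
    rw [hgap, div_le_div_iff₀ (by positivity) (by positivity)]
    calc B * (n * √n) ≤ 3 * M * √(n + 1) * (n * √n) := by gcongr
      _ = 3 * M * n * (√n * √(n + 1)) := by ring
      _ ≤ 3 * M * n * (n + 1) := by gcongr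
      _ = 3 * M * (n * (n + 1)) := by ring
  have hsqrt_two : 4 / 3 ≤ √2 := by
    rw [Real.le_sqrt (by norm_num) (by norm_num)]
    norm_num
  have hpay : 3 * M / (n * √n) ≤ (3 * √2 - 1) * M / (n * √n) := by
    gcongr
    linarith
  rw [sub_mul, one_mul, sub_div] at hpay
  linarith

lemma le_div_succ_of_recursion {κ M n x y : ℝ} (hκ : 0 < κ) (hκM : κ ≤ M) (hn : 1 ≤ n)
    (hx : x ≤ 9 * M ^ 2 / κ / n)
    (hlarge : √(2 * κ) / n < √x → y ≤ x - √(2 * κ) / n * √x + M / (n * √n))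
    (hsmall : √x ≤ √(2 * κ) / n → y ≤ M / (n * √n))
    (hslow : y ≤ 3 * M / √(n + 1)) :
    y ≤ 9 * M ^ 2 / κ / (n + 1) := by
  have hM : 0 ≤ M := hκ.le.trans hκM
  rcases le_total (3 * M * √(n + 1)) (9 * M ^ 2 / κ) with hB | hB
  · exact le_div_of_le_div_sqrt (by linarith) hslow hB
  rcases lt_or_ge (√(2 * κ) / n) √x with hxlarge | hxsmall
  · exact le_div_succ_of_descent hκ hM (by linarith) hx hxlarge.le (hlarge hxlarge) hB
  · exact le_div_succ_of_le_noise hκ hκM hn (hsmall hxsmall)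

theorem fw_strongly_convex_induction_general
    (h : ℕ → ℝ) (γ μ β D C1 C2 : ℝ)
    (hγ : 0 < γ) (hμ : 0 < μ)
    (hC1 : 0 ≤ C1) (hC2 : 0 ≤ C2)
    (hβD : γ ^ 2 * μ ≤ β * D ^ 2)
    (h1 : h 1 ≤ β * D ^ 2 / 2)
    (hrec1 : ∀ t : ℕ, 1 ≤ t → γ * Real.sqrt (2 * μ) / ((t : ℝ) + 1) < Real.sqrt (h t) →
      h (t + 1) ≤ h t - γ * Real.sqrt (2 * μ) / ((t : ℝ) + 1) * Real.sqrt (h t)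
        + C1 / ((t : ℝ) + 1) ^ ((3 : ℝ) / 2) + C2 / ((t : ℝ) + 1) ^ 2)
    (hrec2 : ∀ t : ℕ, 1 ≤ t → Real.sqrt (h t) ≤ γ * Real.sqrt (2 * μ) / ((t : ℝ) + 1) →
      h (t + 1) ≤ C1 / ((t : ℝ) + 1) ^ ((3 : ℝ) / 2) + C2 / ((t : ℝ) + 1) ^ 2)
    (hslow : ∀ t : ℕ, 1 ≤ t → h t ≤ 3 * (β * D ^ 2 + C1 + C2) / Real.sqrt ((t : ℝ) + 1)) :
    ∀ t ≥ 1, h t ≤ 9 * (β * D ^ 2 + C1 + C2) ^ 2 / (γ ^ 2 * μ) / ((t : ℝ) + 1) := by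
  set κ := γ ^ 2 * μ
  set M := β * D ^ 2 + C1 + C2
  have hκ : 0 < κ := by positivity
  have hκM : κ ≤ M := by linarith
  have hrate : γ * √(2 * μ) = √(2 * κ) := by
    rw [show 2 * κ = γ ^ 2 * (2 * μ) by ring, Real.sqrt_mul (sq_nonneg γ), Real.sqrt_sq hγ.le]
  have hnoise (n : ℝ) (hn : 1 ≤ n) : C1 / n ^ ((3 : ℝ) / 2) + C2 / n ^ 2 ≤ M / (n * √n) :=
    (div_rpow_three_halves_add_div_sq_le hC2 hn).trans (by gcongr; linarith)
  intro t ht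
  induction t, ht using Nat.le_induction with
  | base =>
    rw [Nat.cast_one, one_add_one_eq_two]
    linarith [nine_mul_le_nine_mul_sq_div hκ hκM]
  | succ s hs ih =>
    have hn : (1 : ℝ) ≤ s + 1 := le_add_of_nonneg_left s.cast_nonneg
    push_cast
    refine le_div_succ_of_recursion hκ hκM hn ih (fun hlarge => ?_) (fun hsmall => ?_)
      (by simpa using hslow (s + 1) (by omega))
    · rw [← hrate] at hlarge ⊢
      linarith [hrec1 s hs hlarge, hnoise _ hn]
    · rw [← hrate] at hsmall
      linarith [hrec2 s hs hsmall, hnoise _ hn]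

theorem fw_strongly_convex_induction
    (h : ℕ → ℝ) (γ μ β D C1 C2 : ℝ)
    (hγ : 0 < γ) (hμ : 0 < μ) (hβ : 0 < β) (hD : 0 < D)
    (hC1 : 0 ≤ C1) (hC2 : 0 ≤ C2)
    (hβD : γ ^ 2 * μ ≤ β * D ^ 2)
    (hpos : ∀ t, 0 ≤ h t)
    (h1 : h 1 ≤ β * D ^ 2 / 2)
    (hrec1 : ∀ t : ℕ, 1 ≤ t → γ * Real.sqrt (2 * μ) / ((t : ℝ) + 1) < Real.sqrt (h t) →
      h (t + 1) ≤ h t - γ * Real.sqrt (2 * μ) / ((t : ℝ) + 1) * Real.sqrt (h t)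
        + C1 / ((t : ℝ) + 1) ^ ((3 : ℝ) / 2) + C2 / ((t : ℝ) + 1) ^ 2)
    (hrec2 : ∀ t : ℕ, 1 ≤ t → Real.sqrt (h t) ≤ γ * Real.sqrt (2 * μ) / ((t : ℝ) + 1) →
      h (t + 1) ≤ C1 / ((t : ℝ) + 1) ^ ((3 : ℝ) / 2) + C2 / ((t : ℝ) + 1) ^ 2)
    (hslow : ∀ t : ℕ, 1 ≤ t → h t ≤ 3 * (β * D ^ 2 + C1 + C2) / Real.sqrt ((t : ℝ) + 1)) :
    ∀ t ≥ 1, h t ≤ 9 * (β * D ^ 2 + C1 + C2) ^ 2 / (γ ^ 2 * μ) / ((t : ℝ) + 1) :=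
  fw_strongly_convex_induction_general h γ μ β D C1 C2 hγ hμ hC1 hC2 hβD h1 hrec1 hrec2 hslow
end
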